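/- Suppose a nonnegative-integer-valued random variable T satisfies, for every γ ∈ (0,1], E[T] ≤ 2α·(log(1/w(γ)) + 2·log(1/γ)) + 22 with α = 1/log(4/3), where w is the width function of a unimodal density r on [0,1] with sup r = r_max ≥ 1. Then E[T] ≤ 4α·log(r_max) + 4α·log 2 + 22. -/

import Mathlib

open MeasureTheory Set

/-- `r` is unimodal on `[a,b]` with mode `xm`. -/
def UnimodalOn (r : ℝ → ℝ) (a b xm : ℝ) : Prop :=
  xm ∈ Set.Icc a b ∧
  (∀ x ∈ Set.Icc a b, ∀ y ∈ Set.Icc a b, x ≤ y → y ≤ xm → r x ≤ r y) ∧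
  (∀ x ∈ Set.Icc a b, ∀ y ∈ Set.Icc a b, xm ≤ x → x ≤ y → r y ≤ r x)

/-- Superlevel set `S(γ) = {x ∈ [0,1] : r x ≥ γ · r_max}`. -/
def superlevel (r : ℝ → ℝ) (rmax γ : ℝ) : Set ℝ :=
  {x ∈ Set.Icc (0:ℝ) 1 | γ * rmax ≤ r x}

/-- Width function `w(γ) = inf {δ ∈ [0,1] : ∃ z ∈ [0,1], S(γ) ⊆ [z, z+δ]}`. -/
noncomputable def widthFun (r : ℝ → ℝ) (rmax γ : ℝ) : ℝ :=
  sInf {δ ∈ Set.Icc (0:ℝ) 1 | ∃ z ∈ Set.Icc (0:ℝ) 1,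
    superlevel r rmax γ ⊆ Set.Icc z (z + δ)}

/-!
Let `m(t) = |{x ∈ [0,1] : r x ≥ t}|`. The superlevel set `S(t / r_max)` has measure `m(t)`, so its
width is at least `m(t)`. If `w(γ) < 1 / (4 r_max² γ²)` held for every `γ ∈ (0,1]`, then
`m(t) ≤ min(1, 1/(4t²))` for `t ∈ (0, r_max]` and `m(t) = 0` beyond `r_max`, and the layer-cake
formula would give `1 = ∫ r = ∫₀^∞ m(t) dt ≤ ∫₀^{r_max} min(1, 1/(4t²)) dt = 1 - 1/(4 r_max)`.
Hence some `γ` has `w(γ) γ² ≥ 1/(4 r_max²)`, and the hypothesis at that `γ` is the claim.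
-/

theorem integral_one_div_four_mul_sq {a b : ℝ} (ha : 0 < a) (hab : a ≤ b) :
    ∫ t in a..b, 1 / (4 * t ^ 2) = 1 / (4 * a) - 1 / (4 * b) := by
  have h0 : (0 : ℝ) ∉ uIcc a b := by
    rw [uIcc_of_le hab]; exact fun h => ha.not_ge h.1
  have hpow := integral_zpow (a := a) (b := b) (n := -2) (Or.inr ⟨by norm_num, h0⟩)
  calc ∫ t in a..b, 1 / (4 * t ^ 2) = (1 / 4) * ∫ t in a..b, t ^ (-2 : ℤ) := by
        rw [← intervalIntegral.integral_const_mul]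
        congr 1; ext t; rw [zpow_neg, zpow_ofNat]; field_simp
    _ = 1 / (4 * a) - 1 / (4 * b) := by
        rw [hpow]; norm_num; field_simp; ring

theorem lintegral_Ioc_min_one_one_div_four_mul_sq {c : ℝ} (hc : 1 / 2 ≤ c) :
    ∫⁻ t in Ioc 0 c, ENNReal.ofReal (min 1 (1 / (4 * t ^ 2))) =
      ENNReal.ofReal (1 - 1 / (4 * c)) := by
  have hsplit : Ioc (0 : ℝ) c = Ioc 0 (1 / 2) ∪ Ioc (1 / 2) c :=
    (Ioc_union_Ioc_eq_Ioc (by norm_num) hc).symm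
  have hlow : ∫⁻ t in Ioc (0 : ℝ) (1 / 2), ENNReal.ofReal (min 1 (1 / (4 * t ^ 2))) =
      ENNReal.ofReal (1 / 2) := by
    rw [setLIntegral_congr_fun measurableSet_Ioc (g := fun _ => 1) fun t ht => by
      rw [min_eq_left, ENNReal.ofReal_one]
      rw [le_one_div (by norm_num) (by nlinarith [ht.1])]; nlinarith [ht.1, ht.2]]
    simp [Real.volume_Ioc]
  have hhigh : ∫⁻ t in Ioc (1 / 2 : ℝ) c, ENNReal.ofReal (min 1 (1 / (4 * t ^ 2))) =
      ENNReal.ofReal (1 / 2 - 1 / (4 * c)) := by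
    rw [setLIntegral_congr_fun measurableSet_Ioc (g := fun t => ENNReal.ofReal (1 / (4 * t ^ 2)))
      fun t ht => by
        rw [min_eq_right]
        rw [one_div_le (by nlinarith [ht.1]) (by norm_num)]; nlinarith [ht.1]]
    have hint : IntegrableOn (fun t : ℝ => 1 / (4 * t ^ 2)) (Ioc (1 / 2) c) :=
      (ContinuousOn.integrableOn_Icc (continuousOn_const.div (by fun_prop) fun t ht => by
        nlinarith [ht.1])).mono_set Ioc_subset_Icc_self
    rw [← ofReal_integral_eq_lintegral_ofReal hint (ae_of_all _ fun t => by positivity),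
      ← intervalIntegral.integral_of_le hc, integral_one_div_four_mul_sq (by norm_num) hc]
    norm_num
  have hhigh_nonneg : 0 ≤ 1 / 2 - 1 / (4 * c) := by
    rw [sub_nonneg, div_le_div_iff₀ (by linarith) (by norm_num)]; linarith
  rw [hsplit, lintegral_union measurableSet_Ioc (Ioc_disjoint_Ioc_of_le le_rfl), hlow, hhigh,
    ← ENNReal.ofReal_add (by norm_num) hhigh_nonneg]
  ring_nf

theorem one_mem_widthFun_set (r : ℝ → ℝ) (rmax γ : ℝ) :
    (1 : ℝ) ∈ {δ ∈ Icc (0 : ℝ) 1 | ∃ z ∈ Icc (0 : ℝ) 1,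
      superlevel r rmax γ ⊆ Icc z (z + δ)} :=
  ⟨right_mem_Icc.2 zero_le_one, 0, left_mem_Icc.2 zero_le_one, by
    rw [zero_add]; exact fun _ hx => hx.1⟩

theorem widthFun_le_one (r : ℝ → ℝ) (rmax γ : ℝ) : widthFun r rmax γ ≤ 1 :=
  csInf_le ⟨0, fun _ hδ => hδ.1.1⟩ (one_mem_widthFun_set r rmax γ)

theorem volume_superlevel_le_widthFun (r : ℝ → ℝ) (rmax γ : ℝ) :
    volume (superlevel r rmax γ) ≤ ENNReal.ofReal (widthFun r rmax γ) := by
  have hfin : volume (superlevel r rmax γ) ≠ ⊤ :=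
    measure_ne_top_of_subset (fun _ hx => hx.1) (by simp)
  rw [← ENNReal.ofReal_toReal hfin]
  refine ENNReal.ofReal_le_ofReal (le_csInf ⟨1, one_mem_widthFun_set r rmax γ⟩ ?_)
  rintro δ ⟨⟨hδ, -⟩, z, -, hsub⟩
  refine ENNReal.toReal_le_of_le_ofReal hδ ((measure_mono hsub).trans ?_)
  rw [Real.volume_Icc, add_sub_cancel_left]

theorem restrict_Icc_setOf_le_eq_volume_superlevel {r : ℝ → ℝ} (hmeas : Measurable r)
    {rmax : ℝ} (hrmax : 0 < rmax) (t : ℝ) :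
    volume.restrict (Icc (0 : ℝ) 1) {x | t ≤ r x} = volume (superlevel r rmax (t / rmax)) := by
  rw [Measure.restrict_apply (measurableSet_le measurable_const hmeas), superlevel,
    div_mul_cancel₀ t hrmax.ne', inter_comm]
  rfl

theorem exists_widthFun_ge {r : ℝ → ℝ} {rmax : ℝ} (hrmax : 1 ≤ rmax)
    (hmeas : Measurable r) (hnonneg : ∀ x ∈ Icc (0 : ℝ) 1, 0 ≤ r x)
    (hle : ∀ x ∈ Icc (0 : ℝ) 1, r x ≤ rmax) (hint : ∫ x in Icc (0 : ℝ) 1, r x = 1) :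
    ∃ γ ∈ Ioc (0 : ℝ) 1, 1 / (4 * rmax ^ 2 * γ ^ 2) ≤ widthFun r rmax γ := by
  have hrpos : 0 < rmax := zero_lt_one.trans_le hrmax
  by_contra! hlt
  set ν := volume.restrict (Icc (0 : ℝ) 1)
  have hnn : 0 ≤ᵐ[ν] r := (ae_restrict_mem measurableSet_Icc).mono hnonneg
  have hintegrable : Integrable r ν :=
    (integrable_const rmax).mono' hmeas.aestronglyMeasurable <|
      (ae_restrict_mem measurableSet_Icc).mono fun x hx => by
        rw [Real.norm_eq_abs, abs_of_nonneg (hnonneg x hx)]; exact hle x hx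
  have hlayer : ∫⁻ t in Ioi 0, ν {x | t ≤ r x} = 1 := by
    rw [← lintegral_eq_lintegral_meas_le ν hnn hmeas.aemeasurable,
      ← ofReal_integral_eq_lintegral_ofReal hintegrable hnn, hint, ENNReal.ofReal_one]
  have htail : ∀ t ∈ Ioi rmax, ν {x | t ≤ r x} = 0 := fun t ht => by
    rw [Measure.restrict_apply' measurableSet_Icc]
    convert measure_empty (μ := volume)
    exact eq_empty_of_forall_notMem fun x hx => (not_le.2 ht) (hx.1.trans (hle x hx.2))
  have hbody : ∀ t ∈ Ioc 0 rmax,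
      ν {x | t ≤ r x} ≤ ENNReal.ofReal (min 1 (1 / (4 * t ^ 2))) := fun t ht => by
    have hγ : t / rmax ∈ Ioc (0 : ℝ) 1 := ⟨div_pos ht.1 hrpos, (div_le_one hrpos).2 ht.2⟩
    have hscale : 4 * rmax ^ 2 * (t / rmax) ^ 2 = 4 * t ^ 2 := by field_simp
    rw [restrict_Icc_setOf_le_eq_volume_superlevel hmeas hrpos]
    refine (volume_superlevel_le_widthFun r rmax _).trans (ENNReal.ofReal_le_ofReal ?_)
    exact le_min (widthFun_le_one r rmax _) (hscale ▸ (hlt _ hγ).le)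
  have hupper : (1 : ENNReal) ≤ ENNReal.ofReal (1 - 1 / (4 * rmax)) := calc
    1 = ∫⁻ t in Ioi 0, ν {x | t ≤ r x} := hlayer.symm
    _ = (∫⁻ t in Ioc 0 rmax, ν {x | t ≤ r x}) + ∫⁻ t in Ioi rmax, ν {x | t ≤ r x} := by
        rw [← Ioc_union_Ioi_eq_Ioi hrpos.le,
          lintegral_union measurableSet_Ioi Ioc_disjoint_Ioi_same]
    _ ≤ ∫⁻ t in Ioc 0 rmax, ENNReal.ofReal (min 1 (1 / (4 * t ^ 2))) := by
        rw [setLIntegral_congr_fun measurableSet_Ioi htail, lintegral_zero, add_zero]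
        exact setLIntegral_mono' measurableSet_Ioc hbody
    _ = ENNReal.ofReal (1 - 1 / (4 * rmax)) :=
        lintegral_Ioc_min_one_one_div_four_mul_sq (by linarith)
  rw [ENNReal.one_le_ofReal] at hupper
  linarith [show 0 < 1 / (4 * rmax) by positivity]

theorem log_one_div_add_two_mul_log_one_div_le {w γ R : ℝ} (hγ : 0 < γ) (hR : 0 < R)
    (hw : 1 / (4 * R ^ 2 * γ ^ 2) ≤ w) :
    Real.log (1 / w) + 2 * Real.log (1 / γ) ≤ 2 * Real.log R + 2 * Real.log 2 := by
  have hw0 : 0 < w := lt_of_lt_of_le (by positivity) hw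
  calc Real.log (1 / w) + 2 * Real.log (1 / γ) = Real.log (1 / (w * γ ^ 2)) := by
        simp only [one_div, Real.log_inv]
        rw [Real.log_mul hw0.ne' (by positivity), Real.log_pow]
        push_cast; ring
    _ ≤ Real.log (4 * R ^ 2) := by
        refine Real.log_le_log (by positivity) ?_
        rw [div_le_iff₀ (by positivity)]
        rw [div_le_iff₀ (by positivity)] at hw
        nlinarith
    _ = 2 * Real.log R + 2 * Real.log 2 := by
        rw [show 4 * R ^ 2 = (2 * R) ^ 2 by ring, Real.log_pow, Real.log_mul two_ne_zero hR.ne']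
        push_cast; ring

theorem stmt19_general {Ω : Type*} [MeasurableSpace Ω] (μ : Measure Ω) [IsProbabilityMeasure μ]
    (T : Ω → ℕ)
    (r : ℝ → ℝ) (rmax : ℝ) (hrmax : 1 ≤ rmax)
    (hmeas : Measurable r) (hnonneg : ∀ x ∈ Set.Icc (0:ℝ) 1, 0 ≤ r x)
    (hint : ∫ x in Set.Icc (0:ℝ) 1, r x = 1)
    (hsup : IsLUB (r '' Set.Icc (0:ℝ) 1) rmax)
    (α : ℝ) (hα : α = 1 / Real.log (4/3))
    (hbound : ∀ γ ∈ Set.Ioc (0:ℝ) 1,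
      ∫ ω, (T ω : ℝ) ∂μ ≤
        2 * α * (Real.log (1 / widthFun r rmax γ) + 2 * Real.log (1/γ)) + 22) :
    ∫ ω, (T ω : ℝ) ∂μ ≤ 4 * α * Real.log rmax + 4 * α * Real.log 2 + 22 := by
  have hα0 : 0 ≤ α := by rw [hα]; exact one_div_nonneg.2 (Real.log_nonneg (by norm_num))
  obtain ⟨γ, hγ, hw⟩ := exists_widthFun_ge hrmax hmeas hnonneg
    (fun x hx => hsup.1 (mem_image_of_mem r hx)) hint
  have hlog := log_one_div_add_two_mul_log_one_div_le hγ.1 (by linarith) hw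
  calc ∫ ω, (T ω : ℝ) ∂μ
      ≤ 2 * α * (Real.log (1 / widthFun r rmax γ) + 2 * Real.log (1 / γ)) + 22 := hbound γ hγ
    _ ≤ 2 * α * (2 * Real.log rmax + 2 * Real.log 2) + 22 := by gcongr
    _ = 4 * α * Real.log rmax + 4 * α * Real.log 2 + 22 := by ring

/-- Suppose a nonnegative-integer-valued random variable `T` satisfies, for every
`γ ∈ (0,1]`, `E[T] ≤ 2α(log(1/w(γ)) + 2 log(1/γ)) + 22` with `α = 1/log(4/3)`, where
`w` is the width function of a unimodal probability density `r` on `[0,1]` with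
`sup r = r_max ≥ 1`.  Then `E[T] ≤ 4α log r_max + 4α log 2 + 22`. -/
theorem stmt19 {Ω : Type*} [MeasurableSpace Ω] (μ : Measure Ω) [IsProbabilityMeasure μ]
    (T : Ω → ℕ) (hTmeas : Measurable T)
    (r : ℝ → ℝ) (rmax xm : ℝ) (hrmax : 1 ≤ rmax)
    (hmeas : Measurable r) (hnonneg : ∀ x ∈ Set.Icc (0:ℝ) 1, 0 ≤ r x)
    (huni : UnimodalOn r 0 1 xm)
    (hint : ∫ x in Set.Icc (0:ℝ) 1, r x = 1)
    (hsup : IsLUB (r '' Set.Icc (0:ℝ) 1) rmax)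
    (α : ℝ) (hα : α = 1 / Real.log (4/3))
    (hbound : ∀ γ ∈ Set.Ioc (0:ℝ) 1,
      ∫ ω, (T ω : ℝ) ∂μ ≤
        2 * α * (Real.log (1 / widthFun r rmax γ) + 2 * Real.log (1/γ)) + 22) :
    ∫ ω, (T ω : ℝ) ∂μ ≤ 4 * α * Real.log rmax + 4 * α * Real.log 2 + 22 :=
  stmt19_general μ T r rmax hrmax hmeas hnonneg hint hsup α hα hbound
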